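/- arXiv:2303.14383 — 3 statements merged into one kernel-verified Lean document; each statement's English description precedes it below -/
import Mathlib

section
/- With Δ_W = 1 + Tu^{q−1} − T^q u^{q(q−1)} + ⋯, Δ_T = u^{q−1} − u^{q(q−1)} + ⋯ in A[[u]], and E_T a power series with E_T^{q−1} = Δ_W Δ_T and E_T = u − Tu^q + ⋯, the Laurent series j_T^+ := (Δ_W − T^{(q−1)/2}Δ_T)^2 / E_T^{q−1} has expansion j_T^+ = u^{−(q−1)} + (2(T − T^{(q−1)/2}) − T) + O(u^{q−1}). -/
/-!
Put `ε = u^(q-1)`, `c = T^((q-1)/2)` and write `Δ_T = ε S`. Modulo `u^(2(q-1))` we have `ε² ≡ 0`,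
`Δ_W ≡ 1 + Tε` and `S ≡ 1`, so the numerator is `≡ (1 + (T - c)ε)²` and the unit `Δ_W S` is
`≡ 1 + Tε`. Hence `j_T^+ = ε⁻¹ Q` with `Q ≡ (1 + (T - c)ε)² (1 + Tε)⁻¹ ≡ 1 + (2(T - c) - T)ε`,
and the coefficients of `j_T^+` below `u^(q-1)` can be read off from this.
-/

open PowerSeries

theorem Nat.Prime.three_le_pow_of_odd {p r : ℕ} (hp : p.Prime) (hodd : Odd p) (hr : r ≠ 0) :
    3 ≤ p ^ r := by
  obtain ⟨k, rfl⟩ := hodd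
  have := hp.two_le
  exact le_trans (by omega) (Nat.le_self_pow hr _)

theorem one_add_mul_sq_mul_eq_of_sq_eq_zero {A : Type*} [CommRing A] {ε a t v : A}
    (hε : ε ^ 2 = 0) (hv : v * (1 + t * ε) = 1) : (1 + a * ε) ^ 2 * v = 1 + (2 * a - t) * ε := by
  linear_combination (1 + 2 * a * ε) * (1 - t * ε) * hv +
    (a ^ 2 * v + (1 + 2 * a * ε) * t ^ 2 * v - 2 * a * t) * hε

namespace PowerSeries

variable {R : Type*} [CommRing R]

theorem mk_span_X_pow_eq_iff {n : ℕ} {f g : R⟦X⟧} :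
    Ideal.Quotient.mk (Ideal.span {X ^ n}) f = Ideal.Quotient.mk (Ideal.span {X ^ n}) g ↔
      ∀ i < n, coeff i f = coeff i g := by
  simp only [Ideal.Quotient.eq, Ideal.mem_span_singleton, X_pow_dvd_iff, map_sub, sub_eq_zero]

theorem coeff_one_add_C_mul_X_pow {s : ℕ} (hs : s ≠ 0) (a : R) (i : ℕ) :
    coeff i (1 + C a * X ^ s) = if i = 0 then 1 else if i = s then a else 0 := by
  rw [map_add, coeff_one, coeff_C_mul_X_pow]
  split_ifs <;> simp_all

theorem mk_span_X_pow_eq_one_add_C_mul_X_pow_of_coeff {s : ℕ} (hs : s ≠ 0) {f : R⟦X⟧} {a : R}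
    (h0 : coeff 0 f = 1) (h1 : coeff s f = a)
    (hother : ∀ i < 2 * s, i ≠ 0 → i ≠ s → coeff i f = 0) :
    Ideal.Quotient.mk (Ideal.span {X ^ (2 * s)}) f =
      Ideal.Quotient.mk (Ideal.span {X ^ (2 * s)}) (1 + C a * X ^ s) := by
  refine mk_span_X_pow_eq_iff.2 fun i hi => ?_
  rw [coeff_one_add_C_mul_X_pow hs]
  split_ifs with hi0 his
  · rwa [hi0]
  · rwa [his]
  · exact hother i hi hi0 his

theorem coeff_single_neg_mul_ofPowerSeries (f : R⟦X⟧) (s : ℕ) (n : ℤ) :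
    (HahnSeries.single (-(s : ℤ)) (1 : R) * HahnSeries.ofPowerSeries ℤ R f).coeff n =
      if n + s < 0 then 0 else coeff (n + s).natAbs f := by
  have h := HahnSeries.coeff_single_mul_add (r := 1) (x := HahnSeries.ofPowerSeries ℤ R f)
    (a := n + s) (b := -(s : ℤ))
  rw [add_neg_cancel_right, one_mul] at h
  rw [h, coeff_coe]

variable {K : Type*} [Field K]

theorem ofPowerSeries_div_X_pow_mul (f U : K⟦X⟧) (hU : constantCoeff U ≠ 0) (s : ℕ) :
    HahnSeries.ofPowerSeries ℤ K f / HahnSeries.ofPowerSeries ℤ K (X ^ s * U) =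
      HahnSeries.single (-(s : ℤ)) 1 * HahnSeries.ofPowerSeries ℤ K (f * U⁻¹) := by
  have hne : HahnSeries.ofPowerSeries ℤ K (X ^ s * U) ≠ 0 := by
    rw [map_ne_zero_iff _ HahnSeries.ofPowerSeries_injective]
    exact mul_ne_zero (pow_ne_zero _ X_ne_zero) fun h => hU (by simp [h])
  rw [div_eq_iff hne, mul_assoc, ← map_mul,
    show f * U⁻¹ * (X ^ s * U) = X ^ s * f * (U⁻¹ * U) by ring, PowerSeries.inv_mul_cancel _ hU,
    mul_one, map_mul, HahnSeries.ofPowerSeries_X_pow, ← mul_assoc, HahnSeries.single_mul_single,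
    neg_add_cancel, one_mul, HahnSeries.single_zero_one, one_mul]

theorem mk_span_X_pow_sq_sub_mul_inv {s : ℕ} {W S : K⟦X⟧} {T c : K}
    (hW : Ideal.Quotient.mk (Ideal.span {X ^ (2 * s)}) W =
      Ideal.Quotient.mk (Ideal.span {X ^ (2 * s)}) (1 + C T * X ^ s))
    (hS : Ideal.Quotient.mk (Ideal.span {X ^ (2 * s)}) S = 1) (hU : constantCoeff (W * S) ≠ 0) :
    Ideal.Quotient.mk (Ideal.span {X ^ (2 * s)}) ((W - C c * (X ^ s * S)) ^ 2 * (W * S)⁻¹) =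
      Ideal.Quotient.mk (Ideal.span {X ^ (2 * s)}) (1 + C (2 * (T - c) - T) * X ^ s) := by
  set π := Ideal.Quotient.mk (Ideal.span {(X : K⟦X⟧) ^ (2 * s)})
  have hε : π (X ^ s) ^ 2 = 0 := by
    rw [← map_pow, ← pow_mul, mul_comm s 2]
    exact Ideal.Quotient.eq_zero_iff_mem.2 (Ideal.mem_span_singleton_self _)
  simp only [map_add, map_mul, map_one] at hW
  have hinv : π (W * S)⁻¹ * (1 + π (C T) * π (X ^ s)) = 1 := by
    have hUmk : π (W * S) = 1 + π (C T) * π (X ^ s) := by rw [map_mul, hW, hS, mul_one]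
    rw [← hUmk, ← map_mul, PowerSeries.inv_mul_cancel _ hU, map_one]
  have hB : π (W - C c * (X ^ s * S)) = 1 + π (C (T - c)) * π (X ^ s) := by
    simp only [map_sub, map_mul, hW, hS]
    ring
  rw [map_mul, map_pow, hB, one_add_mul_sq_mul_eq_of_sq_eq_zero hε hinv]
  simp only [map_add, map_sub, map_mul, map_one, map_ofNat]

theorem coeff_single_neg_mul_ofPowerSeries_of_mk_eq {s : ℕ} (hs : s ≠ 0) {f : K⟦X⟧} {a : K}
    (hf : Ideal.Quotient.mk (Ideal.span {X ^ (2 * s)}) f =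
      Ideal.Quotient.mk (Ideal.span {X ^ (2 * s)}) (1 + C a * X ^ s))
    {n : ℤ} (hn : n < s) :
    (HahnSeries.single (-(s : ℤ)) 1 * HahnSeries.ofPowerSeries ℤ K f).coeff n =
      if n = -s then 1 else if n = 0 then a else 0 := by
  rw [coeff_single_neg_mul_ofPowerSeries]
  by_cases hneg : n + s < 0
  · rw [if_pos hneg, if_neg (by omega), if_neg (by omega)]
  · obtain ⟨k, hk⟩ := Int.eq_ofNat_of_zero_le (not_lt.1 hneg)
    rw [if_neg hneg, hk, Int.natAbs_natCast, mk_span_X_pow_eq_iff.1 hf _ (by omega),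
      coeff_one_add_C_mul_X_pow hs]
    split_ifs <;> first | rfl | omega

end PowerSeries

theorem stmt_11_general (p r q : ℕ) (hp : p.Prime) (hpodd : Odd p) (hr : 0 < r) (hq : q = p ^ r)
    (K : Type*) [Field K] (T : K)
    (ΔT ΔW ET : PowerSeries K)
    (hT1 : PowerSeries.coeff (q - 1) ΔT = 1)
    (hTlow : ∀ i < q - 1, PowerSeries.coeff i ΔT = 0)
    (hTmid : ∀ i, q - 1 < i → i < q * (q - 1) → PowerSeries.coeff i ΔT = 0)
    (hW0 : PowerSeries.coeff 0 ΔW = 1)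
    (hW1 : PowerSeries.coeff (q - 1) ΔW = T)
    (hWmid1 : ∀ i, 0 < i → i < q - 1 → PowerSeries.coeff i ΔW = 0)
    (hWmid2 : ∀ i, q - 1 < i → i < q * (q - 1) → PowerSeries.coeff i ΔW = 0)
    (hrel : ET ^ (q - 1) = ΔW * ΔT) :
    ∀ jTplus : LaurentSeries K,
      jTplus = (HahnSeries.ofPowerSeries ℤ K
          ((ΔW - (PowerSeries.C (T ^ ((q - 1) / 2))) * ΔT) ^ 2)) /
          (HahnSeries.ofPowerSeries ℤ K (ET ^ (q - 1))) →
      jTplus.coeff (-((q : ℤ) - 1)) = 1 ∧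
      jTplus.coeff 0 = 2 * (T - T ^ ((q - 1) / 2)) - T ∧
      ∀ n : ℤ, n < (q : ℤ) - 1 → n ≠ -((q : ℤ) - 1) → n ≠ 0 → jTplus.coeff n = 0 := by
  intro jTplus hj
  have hq3 : 3 ≤ q := hq ▸ hp.three_le_pow_of_odd hpodd hr.ne'
  obtain ⟨s, rfl⟩ : ∃ s, q = s + 1 := ⟨q - 1, by omega⟩
  have hsq : 3 * s ≤ (s + 1) * s := by nlinarith
  simp only [Nat.add_sub_cancel] at hT1 hTlow hTmid hW1 hWmid1 hWmid2 hrel hj ⊢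
  obtain ⟨S, rfl⟩ := X_pow_dvd_iff.mpr hTlow
  have hS0 : coeff 0 S = 1 := by rwa [← coeff_X_pow_mul S s, zero_add]
  have hW : Ideal.Quotient.mk (Ideal.span {X ^ (2 * s)}) ΔW =
      Ideal.Quotient.mk (Ideal.span {X ^ (2 * s)}) (1 + C T * X ^ s) :=
    mk_span_X_pow_eq_one_add_C_mul_X_pow_of_coeff (by omega) hW0 hW1 fun i hi hi0 his => by
      rcases lt_or_gt_of_ne his with h | h
      exacts [hWmid1 i (by omega) h, hWmid2 i h (by omega)]
  have hS : Ideal.Quotient.mk (Ideal.span {X ^ (2 * s)}) S = 1 := by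
    have hmid (i : ℕ) (hi : i < 2 * s) (hi0 : i ≠ 0) : coeff i S = 0 := by
      rw [← coeff_X_pow_mul S s]
      exact hTmid _ (by omega) (by omega)
    simpa using mk_span_X_pow_eq_one_add_C_mul_X_pow_of_coeff (a := 0) (by omega) hS0
      (hmid s (by omega) (by omega)) fun i hi hi0 _ => hmid i hi hi0
  have hU : constantCoeff (ΔW * S) ≠ 0 := by
    rw [map_mul, ← coeff_zero_eq_constantCoeff_apply, ← coeff_zero_eq_constantCoeff_apply, hW0,
      hS0, one_mul]
    exact one_ne_zero
  rw [hrel, show ΔW * (X ^ s * S) = X ^ s * (ΔW * S) by ring,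
    ofPowerSeries_div_X_pow_mul _ _ hU] at hj
  subst hj
  have hQ := mk_span_X_pow_sq_sub_mul_inv (c := T ^ (s / 2)) hW hS hU
  rw [Nat.cast_add_one, add_sub_cancel_right]
  refine ⟨?_, ?_, fun n hn hns hn0 => ?_⟩ <;>
    rw [coeff_single_neg_mul_ofPowerSeries_of_mk_eq (by omega) hQ (by omega)]
  · simp
  · simp [show s ≠ 0 by omega]
  · simp [hns, hn0]

/-- With `Δ_W = 1 + Tu^{q−1} − T^q u^{q(q−1)} + ⋯`,
`Δ_T = u^{q−1} − u^{q(q−1)} + ⋯` in `A[[u]]` (encoded by their coefficients below degree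
`q(q−1)`), and `E_T` a power series with `E_T^{q−1} = Δ_W Δ_T` and `E_T = u − Tu^q + ⋯`,
the Laurent series `j_T^+ := (Δ_W − T^{(q−1)/2}Δ_T)² / E_T^{q−1}` has expansion
`j_T^+ = u^{−(q−1)} + (2(T − T^{(q−1)/2}) − T) + O(u^{q−1})`. -/
theorem stmt_11 (p r q : ℕ) (hp : p.Prime) (hpodd : Odd p) (hr : 0 < r) (hq : q = p ^ r)
    (K : Type*) [Field K] (T : K)
    (ΔT ΔW ET : PowerSeries K)
    (hT1 : PowerSeries.coeff (q - 1) ΔT = 1)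
    (hTlow : ∀ i < q - 1, PowerSeries.coeff i ΔT = 0)
    (hTmid : ∀ i, q - 1 < i → i < q * (q - 1) → PowerSeries.coeff i ΔT = 0)
    (hW0 : PowerSeries.coeff 0 ΔW = 1)
    (hW1 : PowerSeries.coeff (q - 1) ΔW = T)
    (hWmid1 : ∀ i, 0 < i → i < q - 1 → PowerSeries.coeff i ΔW = 0)
    (hWmid2 : ∀ i, q - 1 < i → i < q * (q - 1) → PowerSeries.coeff i ΔW = 0)
    (hrel : ET ^ (q - 1) = ΔW * ΔT)
    (hE0 : PowerSeries.coeff 0 ET = 0)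
    (hE1 : PowerSeries.coeff 1 ET = 1)
    (hEq : PowerSeries.coeff q ET = -T) :
    ∀ jTplus : LaurentSeries K,
      jTplus = (HahnSeries.ofPowerSeries ℤ K
          ((ΔW - (PowerSeries.C (T ^ ((q - 1) / 2))) * ΔT) ^ 2)) /
          (HahnSeries.ofPowerSeries ℤ K (ET ^ (q - 1))) →
      jTplus.coeff (-((q : ℤ) - 1)) = 1 ∧
      jTplus.coeff 0 = 2 * (T - T ^ ((q - 1) / 2)) - T ∧
      ∀ n : ℤ, n < (q : ℤ) - 1 → n ≠ -((q : ℤ) - 1) → n ≠ 0 → jTplus.coeff n = 0 :=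
  stmt_11_general p r q hp hpodd hr hq K T ΔT ΔW ET hT1 hTlow hTmid hW0 hW1 hWmid1 hWmid2 hrel
end

section
/- Let A = 𝔽_q[T] and suppose f₀, (f₀)^{−1} ∈ A((u)) have expansions f₀ = Σ_{i≥0} a_i u^{(q−1)(r+i)+l} with a₀ = 1 and 1/f₀ = Σ_{i≥0} a'_i u^{(q−1)(−r+i)−l} with a'₀ = 1. Suppose (f_i)_{i≥0} is a family in A((u)) satisfying f_i = u^{(q−1)(r−i)+l} + O(u^{(q−1)(r+1)+l}), with uniqueness of such normal forms holding (any element of the span of the f_j with expansion u^{(q−1)(r−i)+l} + O(u^{(q−1)(r+1)+l}) equals f_i), and (g_s)_{s≥0} the analogous family for r = l = 0 (g_s = u^{−s(q−1)} + O(u^{q−1})). Then for all i ≥ 0: f_i = f₀ · Σ_{n+s=i} a'_n g_s. -/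
/-!
Write `D = q - 1` and `E = D r + l`. Modulo `u^(E + D)` each `g s` may be replaced by
`u^(-s D)`, since `f₀ = O(u^E)` and `g s - u^(-s D) = O(u^D)`. Then
`f₀ · Σ a'_n u^(-(i-n) D) = u^(E - i D) · f₀ · P` with `P` the truncation of `1/f₀` below
`u^(-E + (i+1) D)`, and `f₀ P ≡ f₀ · (1/f₀) = 1` modulo `u^((i+1) D)`. So `f₀ · Σ a'_n g_(i-n)`
has the normal form `u^(E - i D) + O(u^(E + D))` of `f_i`, and uniqueness concludes.
-/

open Finset

namespace HahnSeries

section OrderTop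

variable {Γ R : Type*} [LinearOrder Γ]

theorem le_orderTop_sub_single_one_iff [AddGroupWithOne R] {x : HahnSeries Γ R} {e N : Γ}
    (he : e < N) :
    (N : WithTop Γ) ≤ (x - single e 1).orderTop ↔
      x.coeff e = 1 ∧ ∀ n, n ≠ e → n < N → x.coeff n = 0 := by
  simp only [le_orderTop_iff_forall, WithTop.coe_lt_coe, coeff_sub, coeff_single, sub_eq_zero]
  constructor
  · intro h
    exact ⟨by simpa using h e he, fun n hne hn => by simpa [hne] using h n hn⟩
  · rintro ⟨h1, h0⟩ n hn
    by_cases hne : n = e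
    · simp [hne, h1]
    · simp [hne, h0 n hne hn]

theorem le_orderTop_sum [AddCommMonoid R] {ι : Type*} {s : Finset ι} {x : ι → HahnSeries Γ R}
    {c : WithTop Γ} (hx : ∀ i ∈ s, c ≤ (x i).orderTop) : c ≤ (∑ i ∈ s, x i).orderTop := by
  rw [le_orderTop_iff_forall]
  intro j hj
  rw [coeff_sum]
  exact sum_eq_zero fun i hi => coeff_eq_zero_of_lt_orderTop (hj.trans_le (hx i hi))

variable [AddCommMonoid Γ] [IsOrderedCancelAddMonoid Γ]

theorem le_orderTop_mul [NonUnitalNonAssocSemiring R] {x y : HahnSeries Γ R} {c d : Γ}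
    (hx : c ≤ x.orderTop) (hy : d ≤ y.orderTop) : ((c + d : Γ) : WithTop Γ) ≤ (x * y).orderTop := by
  rw [WithTop.coe_add]
  exact (add_le_add hx hy).trans orderTop_add_le_mul

end OrderTop

section Progression

variable {R : Type*}

theorem le_orderTop_of_coeff_eq_zero_off_progression [Zero R] {x : HahnSeries ℤ R} {e D : ℤ}
    (hD : 0 ≤ D) (hx : ∀ m : ℤ, (¬ ∃ n : ℕ, m = e + D * n) → x.coeff m = 0) :
    (e : WithTop ℤ) ≤ x.orderTop := by
  rw [le_orderTop_iff_forall]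
  intro m hm
  apply hx m
  rintro ⟨n, rfl⟩
  have : (0 : ℤ) ≤ D * n := by positivity
  simp only [WithTop.coe_lt_coe] at hm
  omega

theorem le_orderTop_sub_sum_single_progression [AddCommGroup R] {x : HahnSeries ℤ R} {e D : ℤ}
    (hD : 0 < D) (hx : ∀ m : ℤ, (¬ ∃ n : ℕ, m = e + D * n) → x.coeff m = 0) (k : ℕ) :
    ((e + D * k : ℤ) : WithTop ℤ) ≤
      (x - ∑ n ∈ range k, single (e + D * n) (x.coeff (e + D * n))).orderTop := by
  apply le_orderTop_of_coeff_eq_zero_off_progression hD.le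
  intro m hm
  rw [coeff_sub, coeff_sum, sub_eq_zero]
  by_cases hprog : ∃ n : ℕ, m = e + D * n
  · obtain ⟨n, rfl⟩ := hprog
    have hn : n < k := by
      by_contra! hkn
      exact hm ⟨n - k, by push_cast [Nat.cast_sub hkn]; ring⟩
    rw [sum_eq_single_of_mem n (mem_range.2 hn), coeff_single_same]
    intro j _ hjn
    apply coeff_single_of_ne
    intro h
    exact hjn (by exact_mod_cast (mul_left_cancel₀ hD.ne' (add_left_cancel h)).symm)
  · rw [hx m hprog]
    exact (sum_eq_zero fun j _ => coeff_single_of_ne fun h => hprog ⟨j, h⟩).symm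

end Progression

theorem le_orderTop_mul_sum_smul_sub_single {R : Type*} [CommRing R] {f finv : HahnSeries ℤ R}
    (hinv : f * finv = 1) {E D : ℤ} {c : ℕ → R} {g : ℕ → HahnSeries ℤ R} {i : ℕ}
    (hf : (E : WithTop ℤ) ≤ f.orderTop)
    (hfinv : ((-E + D * (i + 1) : ℤ) : WithTop ℤ) ≤
      (finv - ∑ n ∈ range (i + 1), single (-E + D * n) (c n)).orderTop)
    (hg : ∀ s : ℕ, (D : WithTop ℤ) ≤ (g s - single (-(s : ℤ) * D) 1).orderTop) :
    ((E + D : ℤ) : WithTop ℤ) ≤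
      (f * ∑ n ∈ range (i + 1), c n • g (i - n) - single (E - D * i) 1).orderTop := by
  set P := ∑ n ∈ range (i + 1), single (-E + D * n) (c n)
  have hshift : single (E - D * i) 1 * P =
      ∑ n ∈ range (i + 1), c n • single (-((i - n : ℕ) : ℤ) * D) (1 : R) := by
    rw [mul_sum]
    refine sum_congr rfl fun n hn => ?_
    rw [single_mul_single, one_mul, Nat.cast_sub (mem_range_succ_iff.1 hn),
      show E - D * i + (-E + D * n) = -((i : ℤ) - n) * D by ring]
    ext m
    simp only [coeff_single, coeff_smul, smul_eq_mul, mul_ite, mul_one, mul_zero]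
    congr
  have htail : ∑ n ∈ range (i + 1), c n • (g (i - n) - single (-((i - n : ℕ) : ℤ) * D) 1) =
      ∑ n ∈ range (i + 1), c n • g (i - n) - single (E - D * i) 1 * P := by
    simp only [hshift, smul_sub, sum_sub_distrib]
  have hsplit : f * ∑ n ∈ range (i + 1), c n • g (i - n) - single (E - D * i) 1 =
      f * ∑ n ∈ range (i + 1), c n • (g (i - n) - single (-((i - n : ℕ) : ℤ) * D) 1) -
        single (E - D * i) 1 * f * (finv - P) := by
    rw [htail]
    linear_combination (single (E - D * i) (1 : R)) * hinv
  rw [hsplit]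
  refine le_trans (le_min ?_ ?_) min_orderTop_le_orderTop_sub
  · exact le_orderTop_mul hf
      (le_orderTop_sum fun n _ => (hg _).trans (orderTop_le_orderTop_smul _ _))
  · convert le_orderTop_mul (le_orderTop_mul orderTop_single_le hf) hfinv using 2
    ring

end HahnSeries

open HahnSeries

theorem stmt_12_general (q : ℕ)
    (Fq : Type*) [Field Fq] [Fintype Fq] (hcard : Fintype.card Fq = q)
    (r l : ℕ)
    (a' : ℕ → Polynomial Fq)
    (f₀ finv : LaurentSeries (Polynomial Fq))
    (hmulinv : f₀ * finv = 1)
    (hf₀0 : ∀ n : ℤ, (¬ ∃ i : ℕ, n = ((q : ℤ) - 1) * ((r : ℤ) + i) + l) → f₀.coeff n = 0)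
    (hfinv : ∀ i : ℕ, finv.coeff (((q : ℤ) - 1) * (-(r : ℤ) + i) - l) = a' i)
    (hfinv0 : ∀ n : ℤ,
      (¬ ∃ i : ℕ, n = ((q : ℤ) - 1) * (-(r : ℤ) + i) - l) → finv.coeff n = 0)
    (fi g : ℕ → LaurentSeries (Polynomial Fq))
    (hg : ∀ s : ℕ, (g s).coeff (-(s : ℤ) * ((q : ℤ) - 1)) = 1 ∧
      ∀ n : ℤ, n ≠ -(s : ℤ) * ((q : ℤ) - 1) → n < (q : ℤ) - 1 → (g s).coeff n = 0)
    (huniq : ∀ i : ℕ, ∀ h ∈ Submodule.span (Polynomial Fq) (Set.range fi),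
      (h.coeff (((q : ℤ) - 1) * ((r : ℤ) - i) + l) = 1 ∧
        ∀ n : ℤ, n ≠ ((q : ℤ) - 1) * ((r : ℤ) - i) + l →
          n < ((q : ℤ) - 1) * ((r : ℤ) + 1) + l → h.coeff n = 0) → h = fi i)
    (hclosed : ∀ s : ℕ, f₀ * g s ∈ Submodule.span (Polynomial Fq) (Set.range fi)) :
    ∀ i : ℕ, fi i = f₀ * ∑ n ∈ Finset.range (i + 1), a' n • g (i - n) := by
  intro i
  set D : ℤ := (q : ℤ) - 1
  have hD : 0 < D := by
    have := hcard ▸ Fintype.one_lt_card (α := Fq)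
    omega
  have hf₀ : ((D * r + l : ℤ) : WithTop ℤ) ≤ f₀.orderTop :=
    le_orderTop_of_coeff_eq_zero_off_progression hD.le fun m hm =>
      hf₀0 m fun ⟨n, hn⟩ => hm ⟨n, by rw [hn]; ring⟩
  have hfinv_trunc : ((-(D * r + l) + D * (i + 1) : ℤ) : WithTop ℤ) ≤
      (finv - ∑ n ∈ range (i + 1), single (-(D * r + l) + D * n) (a' n)).orderTop := by
    have hcoeff (n : ℕ) : finv.coeff (-(D * r + l) + D * n) = a' n := by
      rw [← hfinv n]
      congr 1
      ring
    have := le_orderTop_sub_sum_single_progression hD (e := -(D * r + l)) (fun m hm =>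
      hfinv0 m fun ⟨n, hn⟩ => hm ⟨n, by rw [hn]; ring⟩) (i + 1)
    simpa only [hcoeff, Nat.cast_add, Nat.cast_one] using this
  have hg_sub (s : ℕ) : (D : WithTop ℤ) ≤ (g s - single (-(s : ℤ) * D) 1).orderTop :=
    (le_orderTop_sub_single_one_iff (by nlinarith)).2 (hg s)
  refine (huniq i _ ?_ ?_).symm
  · rw [mul_sum]
    exact Submodule.sum_mem _ fun n _ => by
      rw [← single_zero_mul_eq_smul, mul_left_comm, single_zero_mul_eq_smul]
      exact Submodule.smul_mem _ _ (hclosed _)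
  · have key := le_orderTop_mul_sum_smul_sub_single hmulinv hf₀ hfinv_trunc hg_sub
    rw [show D * r + l + D = D * (r + 1) + l by ring,
      show D * r + l - D * i = D * (r - i) + l by ring] at key
    exact (le_orderTop_sub_single_one_iff (by nlinarith)).1 key

/-- Let `A = 𝔽_q[T]` and suppose `f₀, 1/f₀ ∈ A((u))` have expansions
`f₀ = Σ a_i u^{(q−1)(r+i)+l}` (`a₀ = 1`) and `1/f₀ = Σ a'_i u^{(q−1)(−r+i)−l}` (`a'₀ = 1`).
Let `(f_i)` be a family with `f_i = u^{(q−1)(r−i)+l} + O(u^{(q−1)(r+1)+l})`, with the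
uniqueness of such normal forms holding in the `A`-span of the `f_j` (and the products
`f₀·g_s` lying in that span), and `(g_s)` the analogous family for `r = l = 0`
(`g_s = u^{−s(q−1)} + O(u^{q−1})`).  Then `f_i = f₀ · Σ_{n+s=i} a'_n g_s` for all `i`. -/
theorem stmt_12 (p rr q : ℕ) (hp : p.Prime) (hpodd : Odd p) (hrr : 0 < rr) (hq : q = p ^ rr)
    (Fq : Type*) [Field Fq] [Fintype Fq] (hcard : Fintype.card Fq = q)
    (r l : ℕ) (hl : l ≤ q - 2)
    (a a' : ℕ → Polynomial Fq) (ha0 : a 0 = 1) (ha'0 : a' 0 = 1)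
    (f₀ finv : LaurentSeries (Polynomial Fq))
    (hmulinv : f₀ * finv = 1)
    (hf₀ : ∀ i : ℕ, f₀.coeff (((q : ℤ) - 1) * ((r : ℤ) + i) + l) = a i)
    (hf₀0 : ∀ n : ℤ, (¬ ∃ i : ℕ, n = ((q : ℤ) - 1) * ((r : ℤ) + i) + l) → f₀.coeff n = 0)
    (hfinv : ∀ i : ℕ, finv.coeff (((q : ℤ) - 1) * (-(r : ℤ) + i) - l) = a' i)
    (hfinv0 : ∀ n : ℤ,
      (¬ ∃ i : ℕ, n = ((q : ℤ) - 1) * (-(r : ℤ) + i) - l) → finv.coeff n = 0)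
    (fi g : ℕ → LaurentSeries (Polynomial Fq))
    (hfi : ∀ i : ℕ, (fi i).coeff (((q : ℤ) - 1) * ((r : ℤ) - i) + l) = 1 ∧
      ∀ n : ℤ, n ≠ ((q : ℤ) - 1) * ((r : ℤ) - i) + l →
        n < ((q : ℤ) - 1) * ((r : ℤ) + 1) + l → (fi i).coeff n = 0)
    (hg : ∀ s : ℕ, (g s).coeff (-(s : ℤ) * ((q : ℤ) - 1)) = 1 ∧
      ∀ n : ℤ, n ≠ -(s : ℤ) * ((q : ℤ) - 1) → n < (q : ℤ) - 1 → (g s).coeff n = 0)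
    (huniq : ∀ i : ℕ, ∀ h ∈ Submodule.span (Polynomial Fq) (Set.range fi),
      (h.coeff (((q : ℤ) - 1) * ((r : ℤ) - i) + l) = 1 ∧
        ∀ n : ℤ, n ≠ ((q : ℤ) - 1) * ((r : ℤ) - i) + l →
          n < ((q : ℤ) - 1) * ((r : ℤ) + 1) + l → h.coeff n = 0) → h = fi i)
    (hclosed : ∀ s : ℕ, f₀ * g s ∈ Submodule.span (Polynomial Fq) (Set.range fi)) :
    ∀ i : ℕ, fi i = f₀ * ∑ n ∈ Finset.range (i + 1), a' n • g (i - n) :=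
  stmt_12_general q Fq hcard r l a' f₀ finv hmulinv hf₀0 hfinv hfinv0 fi g hg huniq hclosed
end

section
/- Suppose in a differential ring containing Δ_T, Δ_W, E_T (with E_T invertible) the derivation ∂⁺ satisfies ∂⁺(E_T^{q−1}) = 0 and ∂⁺(Δ_W − T^{(q−1)/2}Δ_T) = −(1/2)(Δ_W + T^{(q−1)/2}Δ_T)E_T, and ∂⁺ satisfies the Leibniz rule. Then for j_T^+ := (Δ_W − T^{(q−1)/2}Δ_T)²/E_T^{q−1}, one has Θ(j_T^+) = −(Δ_W² − T^{q−1}Δ_T²)/E_T^{q−2}, where Θ(j_T^+) is the action of ∂⁺ on the weight-0 element j_T^+. -/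
/-! With `a = Δ_W − T^{(q−1)/2} Δ_T` and `b = Δ_W + T^{(q−1)/2} Δ_T`, the element `E_T^{q−1}` is a
constant for `∂⁺`, so `∂⁺(a² / E_T^{q−1}) = 2a ∂⁺(a) / E_T^{q−1} = −a b E_T / E_T^{q−1}`, and
`a b = Δ_W² − T^{q−1} Δ_T²` because `q − 1` is even. -/

namespace Derivation

variable {R K : Type*} [CommRing R] [Field K] [Algebra R K] (D : Derivation R K K)

theorem map_sq_div_of_map_eq_zero (a b : K) (hb : D b = 0) :
    D (a ^ 2 / b) = 2 * a * D a / b := by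
  rw [leibniz_div_const D _ _ hb, leibniz_pow]
  simp only [nsmul_eq_mul, smul_eq_mul, Nat.cast_ofNat]
  ring

theorem map_sq_div_pow_succ_of_map_eq_neg_half {a b e : K} {n : ℕ} (he : e ≠ 0)
    (h2 : (2 : K) ≠ 0) (hDe : D (e ^ (n + 1)) = 0) (hDa : D a = -(2⁻¹ * (b * e))) :
    D (a ^ 2 / e ^ (n + 1)) = -(a * b / e ^ n) := by
  rw [map_sq_div_of_map_eq_zero D _ _ hDe, hDa]
  field_simp
  ring

end Derivation

/-- Suppose in a differential field containing `Δ_T, Δ_W, E_T` (with `E_T`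
invertible and `2` invertible) the derivation `∂⁺` satisfies `∂⁺(E_T^{q−1}) = 0` and
`∂⁺(Δ_W − T^{(q−1)/2}Δ_T) = −(1/2)(Δ_W + T^{(q−1)/2}Δ_T)E_T`.  Then for
`j_T^+ := (Δ_W − T^{(q−1)/2}Δ_T)²/E_T^{q−1}` one has
`Θ(j_T^+) = −(Δ_W² − T^{q−1}Δ_T²)/E_T^{q−2}`, where `Θ(j_T^+)` is `∂⁺` applied to the
weight-0 element `j_T^+`. -/
theorem stmt_17 (p r q : ℕ) (hp : p.Prime) (hpodd : Odd p) (hr : 0 < r) (hq : q = p ^ r)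
    (R : Type*) [Field R]
    (D : Derivation ℤ R R)
    (T ΔT ΔW ET : R)
    (hET : ET ≠ 0) (h2 : (2 : R) ≠ 0)
    (hD1 : D (ET ^ (q - 1)) = 0)
    (hD2 : D (ΔW - T ^ ((q - 1) / 2) * ΔT)
      = -((2 : R)⁻¹ * ((ΔW + T ^ ((q - 1) / 2) * ΔT) * ET))) :
    D ((ΔW - T ^ ((q - 1) / 2) * ΔT) ^ 2 / ET ^ (q - 1))
      = -((ΔW ^ 2 - T ^ (q - 1) * ΔT ^ 2) / ET ^ (q - 2)) := by
  have hq_odd : Odd q := hq ▸ hpodd.pow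
  have hq_gt : 1 < q := hq ▸ Nat.one_lt_pow hr.ne' hp.one_lt
  have hT : T ^ (q - 1) = (T ^ ((q - 1) / 2)) ^ 2 := by
    rw [← pow_mul, Nat.div_mul_cancel (Nat.Odd.sub_odd hq_odd odd_one).two_dvd]
  have hE : ET ^ (q - 1) = ET ^ (q - 2 + 1) := by rw [show q - 2 + 1 = q - 1 by omega]
  rw [hE, D.map_sq_div_pow_succ_of_map_eq_neg_half hET h2 (hE ▸ hD1) hD2, hT]
  ring
end
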